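/- Let n be even, a, k ∈ ℝ^n, and 1 ≤ m ≤ n/2 − 1. Then {F_m, H}(x) = 0 for all x in the positive orthant (0,∞)^n if and only if S_{jm} = 0 for every j = 1,...,2m, where S_{jm} = a_j (−Σ_{i=1}^{j−1} k_i + Σ_{i=j+1}^{2m} k_i). -/

import Mathlib

/-- Partial derivative `∂f/∂x_i` of a function on `ℝⁿ`. -/
noncomputable def pd {n : ℕ} (f : (Fin n → ℝ) → ℝ) (x : Fin n → ℝ) (i : Fin n) : ℝ :=
  fderiv ℝ f x (Pi.single i 1)

/-- The log-canonical Poisson bracket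
`{f,g}(x) = Σ_{i<j} x_i x_j (∂f/∂x_i ∂g/∂x_j − ∂f/∂x_j ∂g/∂x_i)`. -/
noncomputable def pb {n : ℕ} (f g : (Fin n → ℝ) → ℝ) (x : Fin n → ℝ) : ℝ :=
  ∑ i : Fin n, ∑ j : Fin n,
    if i < j then x i * x j * (pd f x i * pd g x j - pd f x j * pd g x i) else 0

/-- `J_m(x) = (x_1 x_3 ⋯ x_{2m−1})/(x_2 x_4 ⋯ x_{2m})` (1-based; here indices are 0-based,
so the numerator ranges over even indices `< 2m` and the denominator over odd indices `< 2m`). -/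
noncomputable def Jfun {n : ℕ} (m : ℕ) (x : Fin n → ℝ) : ℝ :=
  (∏ i ∈ Finset.univ.filter (fun i : Fin n => i.val < 2*m ∧ Even i.val), x i) /
  (∏ i ∈ Finset.univ.filter (fun i : Fin n => i.val < 2*m ∧ Odd i.val), x i)

/-- `I_m(x) = (x_{2m+2} x_{2m+4} ⋯ x_n)/(x_{2m+1} x_{2m+3} ⋯ x_{n−1})` (1-based; here 0-based:
numerator over odd indices `≥ 2m`, denominator over even indices `≥ 2m`). -/
noncomputable def Ifun {n : ℕ} (m : ℕ) (x : Fin n → ℝ) : ℝ :=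
  (∏ i ∈ Finset.univ.filter (fun i : Fin n => 2*m ≤ i.val ∧ Odd i.val), x i) /
  (∏ i ∈ Finset.univ.filter (fun i : Fin n => 2*m ≤ i.val ∧ Even i.val), x i)

/-- `v_m(x) = a_1 x_1 + ⋯ + a_m x_m` (sum of the first `m` coordinates, 0-based indices `< m`). -/
def vfun {n : ℕ} (a : Fin n → ℝ) (m : ℕ) (x : Fin n → ℝ) : ℝ :=
  ∑ j ∈ Finset.univ.filter (fun j : Fin n => j.val < m), a j * x j

/-- `F_m = v_{2m} I_m`. -/
noncomputable def Ffun {n : ℕ} (a : Fin n → ℝ) (m : ℕ) (x : Fin n → ℝ) : ℝ :=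
  vfun a (2*m) x * Ifun m x

/-- The Hamiltonian `H(x) = Σ_i (a_i x_i + k_i log x_i)`. -/
noncomputable def Hfun {n : ℕ} (a k : Fin n → ℝ) (x : Fin n → ℝ) : ℝ :=
  ∑ i, (a i * x i + k i * Real.log (x i))

/-- `S_{jm} = a_j (−Σ_{i<j} k_i + Σ_{j<i≤2m} k_i)` (here `j : Fin n` is the 0-based index of
the 1-based index `j+1`). -/
def Sfun {n : ℕ} (a k : Fin n → ℝ) (j : Fin n) (m : ℕ) : ℝ :=
  a j * (-(∑ i ∈ Finset.univ.filter (fun i : Fin n => i.val < j.val), k i)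
    + ∑ i ∈ Finset.univ.filter (fun i : Fin n => j.val < i.val ∧ i.val < 2*m), k i)

/-
Write `X_i = x_i ∂/∂x_i`. The log-canonical bracket is `{f, g} = ω(X f, X g)` for the skew form
`ω(p, q) = Σ_{i<j} (p_i q_j - p_j q_i) = Σ_j q_j c_j(p)`, where `c_j(p) = Σ_{i<j} p_i - Σ_{i>j} p_i`.
On the positive orthant `X H = a x + k`, and by the product rule `X F_m = I_m (b + v_{2m} e)`, where
`b` is `a x` cut off after the first `2m` coordinates (so `v_{2m} = Σ b`) and `e` is the exponent
vector of the Laurent monomial `I_m`, alternating `-1, +1, …` from index `2m` on. As `n` and `2m`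
are even, `c_j(e) = -1` and `c_j(b) = v_{2m}` for `j ≥ 2m`, so `c_j(b + v_{2m} e)` vanishes there
and `{F_m, H} = I_m ω(b, b + k')` with `k'` the cut-off of `k`. Since `ω(b, b) = 0`, this equals
`I_m Σ_{j<2m} S_{jm} x_j`: a linear form in `x` times a positive factor, which vanishes on the
orthant iff all its coefficients do.
-/

open Finset

theorem sum_Iio_val_eq_sum_range {M : Type*} [AddCommMonoid M] {n : ℕ} (f : ℕ → M) (j : Fin n) :
    ∑ i ∈ Iio j, f i = ∑ t ∈ range j, f t := by
  rw [← Nat.Iio_eq_range, ← Fin.map_valEmbedding_Iio, sum_map]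
  rfl

theorem sum_Ioi_val_eq_sum_Ico {M : Type*} [AddCommMonoid M] {n : ℕ} (f : ℕ → M) (j : Fin n) :
    ∑ i ∈ Ioi j, f i = ∑ t ∈ Ico ((j : ℕ) + 1) n, f t := by
  rw [Finset.Ico_add_one_left_eq_Ioo, ← Fin.map_valEmbedding_Ioi, sum_map]
  rfl

section SkewForm

variable {n : ℕ}

def skewForm (p q : Fin n → ℝ) : ℝ :=
  ∑ i, ∑ j, if i < j then p i * q j - p j * q i else 0

def skewCoeff (p : Fin n → ℝ) (j : Fin n) : ℝ :=
  ∑ i ∈ Iio j, p i - ∑ i ∈ Ioi j, p i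

theorem skewForm_eq_sum_mul_skewCoeff (p q : Fin n → ℝ) :
    skewForm p q = ∑ j, q j * skewCoeff p j := by
  have hlt : ∑ i, ∑ j, (if i < j then p i * q j else 0) = ∑ j, q j * ∑ i ∈ Iio j, p i := by
    rw [sum_comm]
    refine sum_congr rfl fun j _ => ?_
    rw [mul_sum, ← filter_gt_eq_Iio, sum_filter]
    exact sum_congr rfl fun i _ => by split_ifs <;> ring
  have hgt : ∑ i, ∑ j, (if i < j then p j * q i else 0) = ∑ j, q j * ∑ i ∈ Ioi j, p i := by
    refine sum_congr rfl fun j _ => ?_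
    rw [mul_sum, ← filter_lt_eq_Ioi, sum_filter]
    exact sum_congr rfl fun i _ => by split_ifs <;> ring
  simp only [skewCoeff, mul_sub, sum_sub_distrib]
  rw [← hlt, ← hgt, skewForm, ← sum_sub_distrib]
  refine sum_congr rfl fun i _ => ?_
  rw [← sum_sub_distrib]
  exact sum_congr rfl fun j _ => by split_ifs <;> ring

theorem skewForm_antisymm (p q : Fin n → ℝ) : skewForm p q = -skewForm q p := by
  simp only [skewForm, ← sum_neg_distrib]
  exact sum_congr rfl fun i _ => sum_congr rfl fun j _ => by split_ifs <;> ring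

theorem skewForm_self (p : Fin n → ℝ) : skewForm p p = 0 :=
  sum_eq_zero fun i _ => sum_eq_zero fun j _ => by split_ifs <;> ring

theorem skewForm_add_right (p q r : Fin n → ℝ) :
    skewForm p (q + r) = skewForm p q + skewForm p r := by
  simp only [skewForm, ← sum_add_distrib, Pi.add_apply]
  exact sum_congr rfl fun i _ => sum_congr rfl fun j _ => by split_ifs <;> ring

theorem skewForm_smul_left (c : ℝ) (p q : Fin n → ℝ) :
    skewForm (c • p) q = c * skewForm p q := by
  simp only [skewForm, mul_sum, Pi.smul_apply, smul_eq_mul]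
  exact sum_congr rfl fun i _ => sum_congr rfl fun j _ => by split_ifs <;> ring

theorem skewCoeff_add_smul (p r : Fin n → ℝ) (c : ℝ) (j : Fin n) :
    skewCoeff (p + c • r) j = skewCoeff p j + c * skewCoeff r j := by
  simp only [skewCoeff, Pi.add_apply, Pi.smul_apply, smul_eq_mul, sum_add_distrib, ← mul_sum]
  ring

end SkewForm

section AltExp

variable {n M : ℕ}

-- The exponent of `x t` in `Ifun m` is `altExp (2 * m) t`.
def altExp (M t : ℕ) : ℤ := if M ≤ t then (-1) ^ (t + 1) else 0

noncomputable def altExpCumsum (M t : ℕ) : ℝ := if M ≤ t then ((-1) ^ t - 1) / 2 else 0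

theorem altExpCumsum_of_even {t : ℕ} (ht : Even t) : altExpCumsum M t = 0 := by
  simp [altExpCumsum, ht.neg_one_pow]

theorem altExp_eq_sub (hM : Even M) (t : ℕ) :
    (altExp M t : ℝ) = altExpCumsum M (t + 1) - altExpCumsum M t := by
  unfold altExp altExpCumsum
  rcases lt_trichotomy (t + 1) M with h | h | h
  · simp [show ¬ M ≤ t by omega, show ¬ M ≤ t + 1 by omega]
  · simp [show ¬ M ≤ t by omega, h, hM.neg_one_pow]
  · simp only [show M ≤ t by omega, show M ≤ t + 1 by omega, if_true]
    push_cast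
    ring

theorem altExpCumsum_add_succ (hM : Even M) (t : ℕ) :
    altExpCumsum M t + altExpCumsum M (t + 1) = if M ≤ t then -1 else 0 := by
  unfold altExpCumsum
  rcases lt_trichotomy (t + 1) M with h | h | h
  · simp [show ¬ M ≤ t by omega, show ¬ M ≤ t + 1 by omega]
  · simp [show ¬ M ≤ t by omega, h, hM.neg_one_pow]
  · simp only [show M ≤ t by omega, show M ≤ t + 1 by omega, if_true]
    ring

theorem skewCoeff_altExp (hM : Even M) (hn : Even n) (j : Fin n) :
    skewCoeff (fun i : Fin n => (altExp M i : ℝ)) j = if M ≤ j then -1 else 0 := by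
  rw [skewCoeff, sum_Iio_val_eq_sum_range (fun t => (altExp M t : ℝ)),
    sum_Ioi_val_eq_sum_Ico (fun t => (altExp M t : ℝ))]
  simp only [altExp_eq_sub hM]
  rw [sum_range_sub, sum_Ico_sub _ j.isLt, altExpCumsum_of_even Even.zero,
    altExpCumsum_of_even hn, ← altExpCumsum_add_succ hM]
  ring

end AltExp

section Truncate

variable {n M : ℕ}

def truncate (M : ℕ) (q : Fin n → ℝ) : Fin n → ℝ := fun i => if i.val < M then q i else 0

theorem truncate_add (q r : Fin n → ℝ) : truncate M (q + r) = truncate M q + truncate M r := by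
  ext i
  simp only [truncate, Pi.add_apply]
  split_ifs <;> ring

theorem skewCoeff_truncate_of_le (b : Fin n → ℝ) {j : Fin n} (hj : M ≤ j.val) :
    skewCoeff (truncate M b) j = ∑ i, truncate M b i := by
  have hlow : ∑ i ∈ Iio j, truncate M b i = ∑ i, truncate M b i :=
    sum_subset (subset_univ _) fun i _ hi => if_neg (by simp at hi; omega)
  have hhigh : ∑ i ∈ Ioi j, truncate M b i = 0 :=
    sum_eq_zero fun i hi => if_neg (by simp at hi; omega)
  rw [skewCoeff, hlow, hhigh, sub_zero]

theorem skewCoeff_truncate_of_lt (k : Fin n → ℝ) {j : Fin n} (hj : j.val < M) :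
    skewCoeff (truncate M k) j
      = ∑ i ∈ univ.filter (fun i : Fin n => i.val < j.val), k i
        - ∑ i ∈ univ.filter (fun i : Fin n => j.val < i.val ∧ i.val < M), k i := by
  rw [skewCoeff, ← filter_gt_eq_Iio, ← filter_lt_eq_Ioi]
  simp only [truncate, sum_filter, Fin.lt_def]
  congr 1 <;> refine sum_congr rfl fun i _ => ?_ <;> split_ifs <;> first | rfl | omega

/- Beyond `M` the coefficients `skewCoeff` of `truncate M b` all equal `∑ i, truncate M b i`, while
those of the alternating vector are all `-1`; so they cancel and only the indices below `M` remain. -/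
theorem skewForm_truncate_add_smul_altExp (hM : Even M) (hn : Even n) (b q : Fin n → ℝ) :
    skewForm (truncate M b + (∑ i, truncate M b i) • fun i : Fin n => (altExp M i : ℝ)) q
      = skewForm (truncate M b) (truncate M q) := by
  have hcoeff : ∀ j, skewCoeff
      (truncate M b + (∑ i, truncate M b i) • fun i : Fin n => (altExp M i : ℝ)) j
      = if j.val < M then skewCoeff (truncate M b) j else 0 := by
    intro j
    rw [skewCoeff_add_smul, skewCoeff_altExp hM hn]
    split_ifs with h₁ h₂
    · omega
    · rw [skewCoeff_truncate_of_le b h₁]; ring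
    · ring
    · omega
  simp only [skewForm_eq_sum_mul_skewCoeff, hcoeff]
  exact sum_congr rfl fun j _ => by unfold truncate; split_ifs <;> simp

theorem skewForm_truncate_truncate_add (b k : Fin n → ℝ) :
    skewForm (truncate M b) (truncate M (b + k))
      = ∑ j ∈ univ.filter (fun j : Fin n => j.val < M),
          b j * (-(∑ i ∈ univ.filter (fun i : Fin n => i.val < j.val), k i)
            + ∑ i ∈ univ.filter (fun i : Fin n => j.val < i.val ∧ i.val < M), k i) := by
  rw [truncate_add, skewForm_add_right, skewForm_self, zero_add, skewForm_antisymm,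
    skewForm_eq_sum_mul_skewCoeff, ← sum_neg_distrib, sum_filter]
  refine sum_congr rfl fun j _ => ?_
  by_cases hj : j.val < M
  · rw [skewCoeff_truncate_of_lt k hj]; simp only [truncate, if_pos hj]; ring
  · simp [truncate, hj]

end Truncate

section PartialDerivatives

variable {n : ℕ} {x : Fin n → ℝ}

theorem hasFDerivAt_comp_apply {g : ℝ → ℝ} {g' : ℝ} (j : Fin n) (hg : HasDerivAt g g' (x j)) :
    HasFDerivAt (fun y : Fin n → ℝ => g (y j)) (g' • ContinuousLinearMap.proj (R := ℝ) j) x :=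
  hg.comp_hasFDerivAt x (hasFDerivAt_apply j x)

theorem pd_sum_comp_apply {g : Fin n → ℝ → ℝ} {g' : Fin n → ℝ}
    (hg : ∀ j, HasDerivAt (g j) (g' j) (x j)) (i : Fin n) :
    pd (fun y => ∑ j, g j (y j)) x i = g' i := by
  have h := HasFDerivAt.fun_sum fun j (_ : j ∈ univ) => hasFDerivAt_comp_apply j (hg j)
  rw [pd, h.fderiv]
  simp [Pi.single_apply]

theorem pd_prod_comp_apply {g : Fin n → ℝ → ℝ} {g' : Fin n → ℝ}
    (hg : ∀ j, HasDerivAt (g j) (g' j) (x j)) (i : Fin n) :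
    pd (fun y => ∏ j, g j (y j)) x i = g' i * ∏ j ∈ univ.erase i, g j (x j) := by
  classical
  have h := HasFDerivAt.finsetProd fun j (_ : j ∈ univ) => hasFDerivAt_comp_apply j (hg j)
  rw [pd, h.fderiv]
  simp [Pi.single_apply, mul_comm]

theorem pd_mul {f g : (Fin n → ℝ) → ℝ} (hf : DifferentiableAt ℝ f x)
    (hg : DifferentiableAt ℝ g x) (i : Fin n) :
    pd (fun y => f y * g y) x i = pd f x i * g x + f x * pd g x i := by
  rw [pd, fderiv_fun_mul hf hg, pd, pd]
  simp only [add_apply, smul_apply, smul_eq_mul]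
  ring

theorem mul_pd_prod_zpow (e : Fin n → ℤ) (hx : ∀ j, x j ≠ 0) (i : Fin n) :
    x i * pd (fun y => ∏ j, y j ^ e j) x i = e i * ∏ j, x j ^ e j := by
  rw [pd_prod_comp_apply fun j => hasDerivAt_zpow (e j) (x j) (Or.inl (hx j)),
    ← mul_prod_erase univ (fun j => x j ^ e j) (mem_univ i), zpow_sub_one₀ (hx i)]
  have hxi := hx i
  field_simp

theorem differentiableAt_prod_zpow (e : Fin n → ℤ) (hx : ∀ j, x j ≠ 0) :
    DifferentiableAt ℝ (fun y => ∏ j, y j ^ e j) x := by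
  fun_prop (disch := simp [hx])

end PartialDerivatives

section Euler

variable {n : ℕ} {x : Fin n → ℝ}

theorem pb_eq_skewForm (f g : (Fin n → ℝ) → ℝ) :
    pb f g x = skewForm (fun i => x i * pd f x i) (fun i => x i * pd g x i) :=
  sum_congr rfl fun i _ => sum_congr rfl fun j _ => by split_ifs <;> ring

theorem Ifun_eq_prod_zpow (m : ℕ) (y : Fin n → ℝ) :
    Ifun m y = ∏ j, y j ^ altExp (2 * m) j := by
  rw [Ifun, div_eq_mul_inv, prod_filter, prod_filter, ← prod_inv_distrib, ← prod_mul_distrib]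
  refine prod_congr rfl fun j _ => ?_
  unfold altExp
  rcases Nat.even_or_odd (j : ℕ) with h | h
  · split_ifs <;> simp_all [Nat.not_odd_iff_even.mpr h, h.add_one.neg_one_pow]
  · split_ifs <;> simp_all [Nat.not_even_iff_odd.mpr h, h.add_one.neg_one_pow]

theorem mul_pd_Ifun (m : ℕ) (hx : ∀ j, x j ≠ 0) (i : Fin n) :
    x i * pd (Ifun m) x i = altExp (2 * m) i * Ifun m x := by
  rw [funext (Ifun_eq_prod_zpow m), mul_pd_prod_zpow _ hx]

theorem vfun_eq_sum (a : Fin n → ℝ) (M : ℕ) (y : Fin n → ℝ) :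
    vfun a M y = ∑ j, (if j.val < M then a j else 0) * y j := by
  rw [vfun, sum_filter]
  exact sum_congr rfl fun j _ => by split_ifs <;> simp

theorem mul_pd_vfun (a : Fin n → ℝ) (M : ℕ) (i : Fin n) :
    x i * pd (vfun a M) x i = truncate M (a * x) i := by
  rw [funext (vfun_eq_sum a M),
    pd_sum_comp_apply fun j => (hasDerivAt_id' (x j)).const_mul (if j.val < M then a j else 0),
    truncate]
  split_ifs <;> simp [mul_comm]

theorem mul_pd_Hfun (a k : Fin n → ℝ) (hx : ∀ j, 0 < x j) (i : Fin n) :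
    x i * pd (Hfun a k) x i = a i * x i + k i := by
  have hderiv j : HasDerivAt (fun t => a j * t + k j * Real.log t)
      (a j * 1 + k j * (x j)⁻¹) (x j) :=
    ((hasDerivAt_id _).const_mul _).add ((Real.hasDerivAt_log (hx j).ne').const_mul _)
  rw [show Hfun a k = fun y => ∑ j, (a j * y j + k j * Real.log (y j)) from rfl,
    pd_sum_comp_apply hderiv]
  have hxi := (hx i).ne'
  field_simp

theorem mul_pd_Ffun (a : Fin n → ℝ) (m : ℕ) (hx : ∀ j, 0 < x j) (i : Fin n) :
    x i * pd (Ffun a m) x i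
      = (truncate (2 * m) (a * x) i + vfun a (2 * m) x * altExp (2 * m) i) * Ifun m x := by
  have hx₀ j : x j ≠ 0 := (hx j).ne'
  have hv : DifferentiableAt ℝ (vfun a (2 * m)) x := by
    rw [funext (vfun_eq_sum a _)]
    fun_prop
  have hI : DifferentiableAt ℝ (Ifun m) x := by
    rw [funext (Ifun_eq_prod_zpow m)]
    exact differentiableAt_prod_zpow _ hx₀
  rw [show Ffun a m = fun y => vfun a (2 * m) y * Ifun m y from rfl, pd_mul hv hI]
  linear_combination Ifun m x * mul_pd_vfun a (2 * m) i + vfun a (2 * m) x * mul_pd_Ifun m hx₀ i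

theorem Ifun_pos (m : ℕ) (hx : ∀ i, 0 < x i) : 0 < Ifun m x :=
  div_pos (prod_pos fun i _ => hx i) (prod_pos fun i _ => hx i)

theorem pb_Ffun_Hfun (hn : Even n) (a k : Fin n → ℝ) (m : ℕ) (hx : ∀ i, 0 < x i) :
    pb (Ffun a m) (Hfun a k) x
      = Ifun m x * ∑ j ∈ univ.filter (fun j : Fin n => j.val < 2 * m), Sfun a k j m * x j := by
  have hv : vfun a (2 * m) x = ∑ i, truncate (2 * m) (a * x) i := by
    rw [vfun_eq_sum]
    exact sum_congr rfl fun i _ => by simp only [truncate]; split_ifs <;> simp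
  have hF : (fun i => x i * pd (Ffun a m) x i) = Ifun m x • (truncate (2 * m) (a * x)
      + (∑ i, truncate (2 * m) (a * x) i) • fun i : Fin n => (altExp (2 * m) i : ℝ)) := by
    ext i
    rw [mul_pd_Ffun a m hx, ← hv]
    simp only [Pi.smul_apply, Pi.add_apply, smul_eq_mul]
    ring
  have hH : (fun i => x i * pd (Hfun a k) x i) = a * x + k := by
    ext i
    exact mul_pd_Hfun a k hx i
  rw [pb_eq_skewForm, hF, hH, skewForm_smul_left,
    skewForm_truncate_add_smul_altExp (even_two_mul m) hn, skewForm_truncate_truncate_add]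
  congr 1
  exact sum_congr rfl fun j _ => by rw [Sfun, Pi.mul_apply]; ring

end Euler

theorem eq_zero_of_forall_pos_sum_mul_eq_zero {ι : Type*} [DecidableEq ι] {s : Finset ι}
    {c : ι → ℝ} (h : ∀ x : ι → ℝ, (∀ i, 0 < x i) → ∑ j ∈ s, c j * x j = 0)
    {j : ι} (hj : j ∈ s) : c j = 0 := by
  have h₁ := h 1 fun _ => one_pos
  have h₂ := h (1 + Pi.single j 1) fun i => by
    rcases eq_or_ne i j with rfl | hi <;> simp [*]
  simp only [Pi.add_apply, Pi.one_apply, mul_add, mul_one, sum_add_distrib, Pi.single_apply,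
    mul_ite, mul_zero, sum_ite_eq', if_pos hj] at h₁ h₂
  linarith

theorem stmt_8_general (N : ℕ) (a k : Fin (2*N) → ℝ) (m : ℕ) :
    (∀ x : Fin (2*N) → ℝ, (∀ i, 0 < x i) → pb (Ffun a m) (Hfun a k) x = 0) ↔
    (∀ j : Fin (2*N), j.val < 2*m → Sfun a k j m = 0) := by
  have hpb := fun x => pb_Ffun_Hfun (x := x) (even_two_mul N) a k m
  constructor
  · intro h j hj
    refine eq_zero_of_forall_pos_sum_mul_eq_zero (c := (Sfun a k · m))
      (s := univ.filter fun j : Fin (2*N) => j.val < 2*m) (fun x hx => ?_) (by simpa using hj)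
    have hzero := h x hx
    rw [hpb x hx] at hzero
    exact (mul_eq_zero.mp hzero).resolve_left (Ifun_pos m hx).ne'
  · intro h x hx
    rw [hpb x hx, sum_eq_zero fun j hj => by rw [h j (by simpa using hj), zero_mul], mul_zero]

/-- Proposition 4.1 of the paper: for even `n = 2N` and `1 ≤ m ≤ N − 1`, `{F_m, H} = 0` on the
positive orthant iff `S_{jm} = 0` for every (1-based) `j = 1,…,2m` (0-based `j.val < 2m`). -/
theorem stmt_8 (N : ℕ) (a k : Fin (2*N) → ℝ) (m : ℕ) (hm1 : 1 ≤ m) (hm2 : m + 1 ≤ N) :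
    (∀ x : Fin (2*N) → ℝ, (∀ i, 0 < x i) → pb (Ffun a m) (Hfun a k) x = 0) ↔
    (∀ j : Fin (2*N), j.val < 2*m → Sfun a k j m = 0) :=
  stmt_8_general N a k m
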